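/- arXiv:math-ph/0606047 — 2 statements merged into one kernel-verified Lean document; each statement's English description precedes it below -/
import Mathlib

section
/- Let (s_1,…,s_N) be a Cuntz family of order N on a complex Hilbert space H, let J = (j_1,…,j_l) be a finite word with letters in {1,…,N}, and let Ω ∈ H be a unit vector which is cyclic for the family and satisfies s_J Ω = Ω, such that the vectors s_{j_i}⋯s_{j_l} Ω (i = 1,…,l) form an orthonormal family. Set e_i := s_{j_i}⋯s_{j_l} Ω and V_i := the closed linear span of {s_K s_L^* e_i : |K| = |L|}. Then the subspaces V_1,…,V_l are pairwise orthogonal and H = V_1 ⊕ ⋯ ⊕ V_l; each V_i is invariant under every operator s_K s_L^* with |K| = |L|; the vector e_i satisfies the P[σ_i J]-condition, where σ_i J := (j_i,…,j_l,j_1,…,j_{i−1}); and for each i, every bounded operator on V_i commuting with all restrictions s_K s_L^*|_{V_i} (|K| = |L|) is a scalar multiple of the identity of V_i. -/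
noncomputable section

def IsCuntzFamily {H : Type*} [NormedAddCommGroup H] [InnerProductSpace ℂ H]
    [CompleteSpace H] {N : ℕ} (s : Fin N → H →L[ℂ] H) : Prop :=
  (∀ i j, star (s i) * s j = if i = j then (1 : H →L[ℂ] H) else 0) ∧
  ∑ i, s i * star (s i) = 1

def wordOp {H : Type*} [NormedAddCommGroup H] [InnerProductSpace ℂ H]
    [CompleteSpace H] {N : ℕ} (s : Fin N → H →L[ℂ] H) : List (Fin N) → H →L[ℂ] H
  | [] => 1
  | j :: J => s j * wordOp s J

/-- `Ω` is cyclic for the family `s`: the smallest closed subspace containing `Ω` and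
invariant under all `s i` and `(s i)^*` is the whole space. -/
def IsCyclicVec {H : Type*} [NormedAddCommGroup H] [InnerProductSpace ℂ H]
    [CompleteSpace H] {N : ℕ} (s : Fin N → H →L[ℂ] H) (Ω : H) : Prop :=
  ∀ W : Submodule ℂ H, IsClosed (W : Set H) → Ω ∈ W →
    (∀ i, ∀ x ∈ W, s i x ∈ W ∧ star (s i) x ∈ W) → W = ⊤

/-- Closed linear span of `{s_K s_L^* v : |K| = |L|}`. -/
def UHFSpan {H : Type*} [NormedAddCommGroup H] [InnerProductSpace ℂ H]
    [CompleteSpace H] {N : ℕ} (s : Fin N → H →L[ℂ] H) (v : H) : Submodule ℂ H :=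
  (Submodule.span ℂ {x : H | ∃ K L : List (Fin N), K.length = L.length ∧
      x = (wordOp s K * star (wordOp s L)) v}).topologicalClosure

/-- The `P[w]`-condition for an infinite word `w`. -/
def PCond {H : Type*} [NormedAddCommGroup H] [InnerProductSpace ℂ H]
    [CompleteSpace H] {N : ℕ} (s : Fin N → H →L[ℂ] H) (w : ℕ → Fin N) (Ω : H) : Prop :=
  ∀ n : ℕ, (wordOp s (List.ofFn fun k : Fin n => w k) *
      star (wordOp s (List.ofFn fun k : Fin n => w k))) Ω = Ω

/-! The vectors `e_m := s_{j_m} ⋯ s_{j_l} Ω`, with `m` read mod `l`, satisfy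
`e_m = s_{j_m} e_{m+1}`. Hence `s_K^*` walks forward along the cycle and `s_a` walks backward,
so `s_a` maps `V_{m+1}` into `V_m` and `s_a^*` maps `V_m` into `V_{m+1}`. Writing
`e_a = s_u e_{a+n}` with `|u| = n`, the Cuntz relations reduce `⟪e_a, s_K s_L^* e_b⟫` to a
multiple of `⟪e_{a+n}, e_{b+n}⟫`, which vanishes off the diagonal: the `V_m` are orthogonal.
Their sum is then closed, contains `Ω` and is invariant, so it is everything by cyclicity.

For irreducibility, the projections `p_n = s_w s_w^*` onto the length-`n` prefixes `w` of
`σ_i J` compress every monomial `s_K s_L^*` (once `n ≥ |K|`) to a scalar multiple of `p_n`.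
Since `p_n e_i = e_i`, this gives `p_n y → ⟪e_i, y⟫ e_i` on `V_i`. An operator `T` commuting
with the monomials commutes with the `p_n`, so `T e_i = c e_i`, and then `T = c` on the dense
span of the `s_K s_L^* e_i`. -/

open Filter Topology
open scoped InnerProductSpace

section HilbertSpace

variable {𝕜 E : Type*} [RCLike 𝕜] [NormedAddCommGroup E] [InnerProductSpace 𝕜 E]

theorem Submodule.IsOrtho.topologicalClosure {U V : Submodule 𝕜 E} (h : U ⟂ V) :
    U.topologicalClosure ⟂ V.topologicalClosure := by
  rw [isOrtho_iff_le, orthogonal_closure]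
  exact U.topologicalClosure_minimal h.le (isClosed_orthogonal _)

theorem Submodule.isClosed_iSup_of_pairwise_isOrtho {ι : Type*} [Fintype ι]
    {V : ι → Submodule 𝕜 E} [∀ i, (V i).HasOrthogonalProjection]
    (hV : Pairwise fun i j => V i ⟂ V j) :
    IsClosed ((⨆ i, V i : Submodule 𝕜 E) : Set E) := by
  classical
  refine closure_subset_iff_isClosed.mp fun x hx => ?_
  set W := ⨆ i, V i
  have hsum : ∑ i, (V i).starProjection x ∈ W :=
    sum_mem fun i _ => le_iSup V i ((V i).starProjection_apply_mem x)
  -- the remainder `x - ∑ Pᵢ x` lies in the closure of `W` and is orthogonal to it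
  have hrem_closure : x - ∑ i, (V i).starProjection x ∈ W.topologicalClosure :=
    sub_mem hx (W.le_topologicalClosure hsum)
  have hrem_orth : x - ∑ i, (V i).starProjection x ∈ W.topologicalClosureᗮ := by
    rw [orthogonal_closure, ← iInf_orthogonal, mem_iInf]
    intro j
    rw [← Finset.add_sum_erase _ (fun i => (V i).starProjection x) (Finset.mem_univ j),
      ← sub_sub]
    refine sub_mem ((V j).sub_starProjection_mem_orthogonal x) (sum_mem fun i hi => ?_)
    exact (hV (Finset.ne_of_mem_erase hi)).le ((V i).starProjection_apply_mem x)
  have hrem : x - ∑ i, (V i).starProjection x ∈ (⊥ : Submodule 𝕜 E) :=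
    W.topologicalClosure.inf_orthogonal_eq_bot ▸ mem_inf.mpr ⟨hrem_closure, hrem_orth⟩
  rw [mem_bot, sub_eq_zero] at hrem
  rwa [hrem]

theorem Submodule.dense_span_preimage_coe_topologicalClosure (G : Set E) :
    Dense (Submodule.span 𝕜 ((↑) ⁻¹' G : Set (Submodule.span 𝕜 G).topologicalClosure) :
      Set (Submodule.span 𝕜 G).topologicalClosure) := by
  set K := (Submodule.span 𝕜 G).topologicalClosure
  have himage : (K.subtype : K → E) '' (Submodule.span 𝕜 (K.subtype ⁻¹' G)) =
      Submodule.span 𝕜 G := by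
    rw [← Submodule.map_coe, Submodule.map_span, Submodule.coe_subtype,
      Set.image_preimage_eq_of_subset (Subtype.range_coe (s := (K : Set E)) ▸
        Submodule.subset_span.trans (Submodule.le_topologicalClosure _))]
  rw [Subtype.dense_iff, ← Submodule.coe_subtype, himage, ← Submodule.topologicalClosure_coe]

theorem ContinuousLinearMap.apply_eq_inner_smul_of_mul_mul_eq_smul [CompleteSpace E]
    {P X : E →L[𝕜] E}
    (hP : IsSelfAdjoint P) {e : E} (he : ‖e‖ = 1) (hPe : P e = e) {c : 𝕜}
    (hPXP : P * X * P = c • P) : P (X e) = ⟪e, X e⟫_𝕜 • e := by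
  have hc : P (X e) = c • e := by
    simpa [hPe] using congr($hPXP e)
  have hinner : ⟪e, X e⟫_𝕜 = c := by
    calc ⟪e, X e⟫_𝕜 = ⟪P e, X e⟫_𝕜 := by rw [hPe]
      _ = ⟪e, c • e⟫_𝕜 := by rw [← hc]; exact hP.isSymmetric e (X e)
      _ = c := by simp [inner_smul_right, inner_self_eq_norm_sq_to_K, he]
  rw [hc, hinner]

end HilbertSpace

section Words

variable {H : Type*} [NormedAddCommGroup H] [InnerProductSpace ℂ H] [CompleteSpace H]
  {N : ℕ} {s : Fin N → H →L[ℂ] H}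

theorem wordOp_append (K L : List (Fin N)) :
    wordOp s (K ++ L) = wordOp s K * wordOp s L := by
  induction K with
  | nil => simp [wordOp]
  | cons a K ih => simp [wordOp, ih, mul_assoc]

theorem IsCuntzFamily.star_wordOp_mul_wordOp (hs : IsCuntzFamily s) {K L : List (Fin N)}
    (h : K.length = L.length) :
    star (wordOp s K) * wordOp s L = if K = L then 1 else 0 := by
  induction K generalizing L with
  | nil => cases L <;> simp_all [wordOp]
  | cons a K ih =>
    cases L with
    | nil => simp at h
    | cons b L =>
      have hmid : star (wordOp s (a :: K)) * wordOp s (b :: L) =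
          star (wordOp s K) * (star (s a) * s b) * wordOp s L := by
        simp only [wordOp, star_mul, mul_assoc]
      rw [hmid, hs.1]
      by_cases hab : a = b
      · simp [hab, ih (by simpa using h)]
      · simp [hab]

theorem IsCuntzFamily.star_wordOp_mul_self (hs : IsCuntzFamily s) (K : List (Fin N)) :
    star (wordOp s K) * wordOp s K = 1 := by
  simp [hs.star_wordOp_mul_wordOp rfl]

end Words

section Monomials

variable {H : Type*} [NormedAddCommGroup H] [InnerProductSpace ℂ H] [CompleteSpace H]
  {N : ℕ} {s : Fin N → H →L[ℂ] H}

variable (s) in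
/-- `0` is included so that the set is closed under multiplication. -/
def uhfMonomials : Set (H →L[ℂ] H) :=
  {X | X = 0 ∨ ∃ K L : List (Fin N), K.length = L.length ∧ X = wordOp s K * star (wordOp s L)}

theorem wordOp_mul_star_mem_uhfMonomials {K L : List (Fin N)} (h : K.length = L.length) :
    wordOp s K * star (wordOp s L) ∈ uhfMonomials s :=
  Or.inr ⟨K, L, h, rfl⟩

theorem star_mem_uhfMonomials {X : H →L[ℂ] H} (hX : X ∈ uhfMonomials s) :
    star X ∈ uhfMonomials s := by
  obtain rfl | ⟨K, L, h, rfl⟩ := hX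
  · exact Or.inl (star_zero _)
  · simpa using wordOp_mul_star_mem_uhfMonomials h.symm

theorem IsCuntzFamily.wordOp_mul_star_mul_mem_uhfMonomials (hs : IsCuntzFamily s)
    {K L M P : List (Fin N)} (hKL : K.length = L.length) (hMP : M.length = P.length)
    (hLM : L.length ≤ M.length) :
    wordOp s K * star (wordOp s L) * (wordOp s M * star (wordOp s P)) ∈ uhfMonomials s := by
  have hsplit : wordOp s M = wordOp s (M.take L.length) * wordOp s (M.drop L.length) := by
    rw [← wordOp_append, List.take_append_drop]
  have hprod : wordOp s K * star (wordOp s L) * (wordOp s M * star (wordOp s P)) =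
      wordOp s K * (star (wordOp s L) * wordOp s (M.take L.length)) *
        wordOp s (M.drop L.length) * star (wordOp s P) := by
    rw [hsplit]; simp only [mul_assoc]
  rw [hprod, hs.star_wordOp_mul_wordOp (by simp [hLM])]
  split_ifs
  · rw [mul_one, ← wordOp_append]
    exact wordOp_mul_star_mem_uhfMonomials (by simp; omega)
  · exact Or.inl (by simp)

theorem IsCuntzFamily.mul_mem_uhfMonomials (hs : IsCuntzFamily s) {X Y : H →L[ℂ] H}
    (hX : X ∈ uhfMonomials s) (hY : Y ∈ uhfMonomials s) : X * Y ∈ uhfMonomials s := by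
  obtain rfl | ⟨K, L, hKL, rfl⟩ := hX
  · exact Or.inl (zero_mul _)
  obtain rfl | ⟨M, P, hMP, rfl⟩ := hY
  · exact Or.inl (mul_zero _)
  rcases le_total L.length M.length with hLM | hML
  · exact hs.wordOp_mul_star_mul_mem_uhfMonomials hKL hMP hLM
  · rw [← star_star (_ * _)]
    refine star_mem_uhfMonomials ?_
    simpa [mul_assoc] using
      hs.wordOp_mul_star_mul_mem_uhfMonomials hMP.symm hKL.symm hML

theorem mul_mul_star_mem_uhfMonomials {X : H →L[ℂ] H} (hX : X ∈ uhfMonomials s)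
    (a c : Fin N) :
    s a * X * star (s c) ∈ uhfMonomials s := by
  obtain rfl | ⟨K, L, h, rfl⟩ := hX
  · exact Or.inl (by simp)
  · simpa [wordOp, mul_assoc] using
      wordOp_mul_star_mem_uhfMonomials (s := s) (K := a :: K) (L := c :: L) (by simpa)

theorem IsCuntzFamily.star_mul_mul_mem_uhfMonomials (hs : IsCuntzFamily s)
    {X : H →L[ℂ] H} (hX : X ∈ uhfMonomials s) (a c : Fin N) :
    star (s a) * X * s c ∈ uhfMonomials s := by
  obtain rfl | ⟨K, L, h, rfl⟩ := hX
  · exact Or.inl (by simp)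
  cases K with
  | nil =>
    obtain rfl : L = [] := List.eq_nil_of_length_eq_zero h.symm
    rw [wordOp, star_one, mul_one, mul_one, hs.1]
    split_ifs
    · simpa [wordOp] using wordOp_mul_star_mem_uhfMonomials (s := s) (K := []) (L := []) rfl
    · exact Or.inl rfl
  | cons b K =>
    obtain ⟨d, L, rfl⟩ := List.exists_cons_of_length_eq_add_one h.symm
    have hprod : star (s a) * (wordOp s (b :: K) * star (wordOp s (d :: L))) * s c =
        (star (s a) * s b) * (wordOp s K * star (wordOp s L)) * (star (s d) * s c) := by
      simp only [wordOp, star_mul, mul_assoc]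
    rw [hprod, hs.1, hs.1]
    split_ifs
    · simpa using wordOp_mul_star_mem_uhfMonomials (s := s) (by simpa using h)
    all_goals exact Or.inl (by simp)

end Monomials

section UHFSpan

variable {H : Type*} [NormedAddCommGroup H] [InnerProductSpace ℂ H] [CompleteSpace H]
  {N : ℕ} {s : Fin N → H →L[ℂ] H}

instance (v : H) : CompleteSpace (UHFSpan s v) := by
  unfold UHFSpan; infer_instance

theorem apply_mem_uhfSpan {X : H →L[ℂ] H} (hX : X ∈ uhfMonomials s) (v : H) :
    X v ∈ UHFSpan s v := by
  obtain rfl | ⟨K, L, h, rfl⟩ := hX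
  · exact zero_mem _
  · exact Submodule.le_topologicalClosure _ (Submodule.subset_span ⟨K, L, h, rfl⟩)

theorem self_mem_uhfSpan (v : H) : v ∈ UHFSpan s v := by
  simpa [wordOp] using apply_mem_uhfSpan (wordOp_mul_star_mem_uhfMonomials (s := s)
    (K := []) (L := []) rfl) v

theorem uhfSpan_le_comap {A : H →L[ℂ] H} {v w : H}
    (h : ∀ X ∈ uhfMonomials s, A (X v) ∈ UHFSpan s w) :
    UHFSpan s v ≤ (UHFSpan s w).comap (A : H →ₗ[ℂ] H) := by
  refine Submodule.topologicalClosure_minimal _ ?_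
    ((Submodule.isClosed_topologicalClosure _).preimage A.continuous)
  rw [Submodule.span_le]
  rintro _ ⟨K, L, hKL, rfl⟩
  exact h _ (wordOp_mul_star_mem_uhfMonomials hKL)

theorem IsCuntzFamily.apply_mem_uhfSpan_of_mem (hs : IsCuntzFamily s) {X : H →L[ℂ] H}
    (hX : X ∈ uhfMonomials s) {v x : H} (hx : x ∈ UHFSpan s v) : X x ∈ UHFSpan s v :=
  uhfSpan_le_comap (fun _ hY => apply_mem_uhfSpan (hs.mul_mem_uhfMonomials hX hY) v) hx

theorem IsCuntzFamily.isOrtho_uhfSpan (hs : IsCuntzFamily s) {v w : H}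
    (h : ∀ X ∈ uhfMonomials s, ⟪v, X w⟫_ℂ = 0) : UHFSpan s v ⟂ UHFSpan s w := by
  refine Submodule.IsOrtho.topologicalClosure (Submodule.isOrtho_span.mpr ?_)
  rintro _ ⟨K, L, hKL, rfl⟩ _ ⟨K', L', hKL', rfl⟩
  rw [← ContinuousLinearMap.adjoint_inner_right, ← ContinuousLinearMap.star_eq_adjoint,
    ← mul_apply_eq_comp]
  exact h _ (hs.mul_mem_uhfMonomials (star_mem_uhfMonomials (wordOp_mul_star_mem_uhfMonomials hKL))
    (wordOp_mul_star_mem_uhfMonomials hKL'))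

end UHFSpan

section Irreducibility

variable {H : Type*} [NormedAddCommGroup H] [InnerProductSpace ℂ H] [CompleteSpace H]
  {N : ℕ} {s : Fin N → H →L[ℂ] H}

variable (s) in
def wordProj (w : List (Fin N)) : H →L[ℂ] H :=
  wordOp s w * star (wordOp s w)

theorem IsCuntzFamily.isStarProjection_wordProj (hs : IsCuntzFamily s) (w : List (Fin N)) :
    IsStarProjection (wordProj s w) where
  isIdempotentElem := by
    rw [IsIdempotentElem, wordProj, mul_assoc, ← mul_assoc (star _), hs.star_wordOp_mul_self,
      one_mul]
  isSelfAdjoint := IsSelfAdjoint.mul_star_self _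

theorem IsCuntzFamily.exists_star_wordOp_mul_mul_wordOp_eq_smul (hs : IsCuntzFamily s)
    {K L w : List (Fin N)} (hKL : K.length = L.length) (hw : K.length ≤ w.length) :
    ∃ c : ℂ, star (wordOp s w) * (wordOp s K * star (wordOp s L)) * wordOp s w = c • 1 := by
  have hsplit : wordOp s w = wordOp s (w.take K.length) * wordOp s (w.drop K.length) := by
    rw [← wordOp_append, List.take_append_drop]
  have hprod : star (wordOp s w) * (wordOp s K * star (wordOp s L)) * wordOp s w =
      star (wordOp s (w.drop K.length)) * (star (wordOp s (w.take K.length)) * wordOp s K) *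
        (star (wordOp s L) * wordOp s (w.take K.length)) * wordOp s (w.drop K.length) := by
    rw [hsplit, star_mul]; simp only [mul_assoc]
  rw [hprod, hs.star_wordOp_mul_wordOp (by simp [hw]),
    hs.star_wordOp_mul_wordOp (by simp [← hKL, hw])]
  split_ifs
  · exact ⟨1, by simp [hs.star_wordOp_mul_self]⟩
  all_goals exact ⟨0, by simp⟩

theorem IsCuntzFamily.tendsto_wordProj_apply (hs : IsCuntzFamily s) {ω : ℕ → Fin N} {e : H}
    (he : ‖e‖ = 1) (hP : PCond s ω e) {y : H} (hy : y ∈ UHFSpan s e) :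
    Tendsto (fun n => wordProj s (List.ofFn fun k : Fin n => ω k) y) atTop
      (𝓝 (⟪e, y⟫_ℂ • e)) := by
  have hlip : ∀ n, LipschitzWith 1 (wordProj s (List.ofFn fun k : Fin n => ω k)) := fun n =>
    ContinuousLinearMap.lipschitzWith_of_opNorm_le (by
      simpa using (hs.isStarProjection_wordProj _).norm_le)
  have hclosed : IsClosed {y : H | Tendsto (fun n => wordProj s (List.ofFn fun k : Fin n => ω k) y)
      atTop (𝓝 (⟪e, y⟫_ℂ • e))} :=
    (LipschitzWith.uniformEquicontinuous _ 1 hlip).equicontinuous.isClosed_setOfPred_tendsto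
      (by fun_prop)
  rw [UHFSpan, ← SetLike.mem_coe, Submodule.topologicalClosure_coe] at hy
  refine closure_minimal (fun y hy => ?_) hclosed hy
  induction hy using Submodule.span_induction with
  | mem y hy =>
    obtain ⟨K, L, hKL, rfl⟩ := hy
    refine tendsto_const_nhds.congr' ?_
    filter_upwards [eventually_ge_atTop K.length] with n hn
    set w := List.ofFn fun k : Fin n => ω k
    obtain ⟨c, hc⟩ :=
      hs.exists_star_wordOp_mul_mul_wordOp_eq_smul hKL (w := w) (by simpa [w] using hn)
    refine (ContinuousLinearMap.apply_eq_inner_smul_of_mul_mul_eq_smul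
      (hs.isStarProjection_wordProj w).isSelfAdjoint he (hP n) (c := c) ?_).symm
    calc wordProj s w * (wordOp s K * star (wordOp s L)) * wordProj s w
        = wordOp s w * (star (wordOp s w) * (wordOp s K * star (wordOp s L)) * wordOp s w) *
            star (wordOp s w) := by simp only [wordProj, mul_assoc]
      _ = c • wordProj s w := by rw [hc]; simp [wordProj]
  | zero => simp
  | add x y _ _ hx hy => simpa [inner_add_right, add_smul] using hx.add hy
  | smul a x _ hx => simpa [inner_smul_right, smul_smul] using hx.const_smul a

theorem IsCuntzFamily.exists_eq_smul_of_commute (hs : IsCuntzFamily s) {ω : ℕ → Fin N} {e : H}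
    (he : ‖e‖ = 1) (hP : PCond s ω e) (T : UHFSpan s e →L[ℂ] UHFSpan s e)
    (hT : ∀ K L : List (Fin N), K.length = L.length → ∀ x y : UHFSpan s e,
      (y : H) = (wordOp s K * star (wordOp s L)) (x : H) →
      (T y : H) = (wordOp s K * star (wordOp s L)) (T x : H)) :
    ∃ c : ℂ, ∀ x, T x = c • x := by
  set ê : UHFSpan s e := ⟨e, self_mem_uhfSpan e⟩
  set c := ⟪e, T ê⟫_ℂ
  -- `T ê` is fixed by every `wordProj` of a prefix of `ω`; these converge to `⟪e, ·⟫ • e`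
  have hTe : (T ê : H) = c • e := by
    refine tendsto_nhds_unique (tendsto_const_nhds.congr fun n => ?_)
      (hs.tendsto_wordProj_apply he hP (T ê).2)
    exact hT _ _ rfl ê ê (hP n).symm
  have hTc : T = c • ContinuousLinearMap.id ℂ _ := by
    refine ContinuousLinearMap.ext_on (Submodule.dense_span_preimage_coe_topologicalClosure _) ?_
    rintro (x : UHFSpan s e) ⟨K, L, hKL, hx⟩
    refine Subtype.ext ((hT K L hKL ê x hx).trans ?_)
    change _ = c • (x : H)
    rw [hTe, hx, map_smul]
  exact ⟨c, fun x => by rw [hTc]; rfl⟩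

end Irreducibility

section Cycle

variable {H : Type*} [NormedAddCommGroup H] [InnerProductSpace ℂ H] [CompleteSpace H]
  {N l : ℕ} {s : Fin N → H →L[ℂ] H} {J : Fin l → Fin N} {Ω : H}

variable (s J Ω) in
/-- `e_{m mod l}`, indexed by `m : ℕ` so that the cycle can be traversed without wrapping. -/
def cycleVec (m : ℕ) : H :=
  wordOp s ((List.ofFn J).drop (m % l)) Ω

variable (J) in
def cycleLetter (hl : 0 < l) (m : ℕ) : Fin N :=
  J ⟨m % l, Nat.mod_lt _ hl⟩

theorem cycleVec_val (i : Fin l) : cycleVec s J Ω i = wordOp s ((List.ofFn J).drop i) Ω := by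
  rw [cycleVec, Nat.mod_eq_of_lt i.isLt]

theorem cycleVec_mod (m : ℕ) : cycleVec s J Ω (m % l) = cycleVec s J Ω m := by
  simp [cycleVec]

theorem cycleVec_add_period (m : ℕ) : cycleVec s J Ω (m + l) = cycleVec s J Ω m := by
  simp [cycleVec]

theorem cycleVec_eq_apply_succ (hl : 0 < l) (hfix : wordOp s (List.ofFn J) Ω = Ω) (m : ℕ) :
    cycleVec s J Ω m = s (cycleLetter J hl m) (cycleVec s J Ω (m + 1)) := by
  have hm : m % l < (List.ofFn J).length := by simpa using Nat.mod_lt m hl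
  rw [cycleVec, List.drop_eq_getElem_cons hm, List.getElem_ofFn, wordOp, mul_apply_eq_comp]
  congr 1
  have hsucc : (m + 1) % l = (m % l + 1) % l := ((Nat.mod_modEq m l).add_right 1).symm
  rcases Nat.lt_or_ge (m % l + 1) l with h | h
  · rw [cycleVec, hsucc, Nat.mod_eq_of_lt h]
  · have hwrap : m % l + 1 = l := by have := Nat.mod_lt m hl; omega
    rw [cycleVec, hsucc, hwrap, Nat.mod_self, List.drop_zero, hfix,
      List.drop_eq_nil_of_le (by simp), wordOp, one_apply_eq_self]

theorem IsCuntzFamily.star_apply_cycleVec (hs : IsCuntzFamily s) (hl : 0 < l)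
    (hfix : wordOp s (List.ofFn J) Ω = Ω) (m : ℕ) :
    star (s (cycleLetter J hl m)) (cycleVec s J Ω m) = cycleVec s J Ω (m + 1) := by
  rw [cycleVec_eq_apply_succ hl hfix m, ← mul_apply_eq_comp, hs.1, if_pos rfl, one_apply_eq_self]

theorem wordOp_cycleLetter_apply_cycleVec (hl : 0 < l) (hfix : wordOp s (List.ofFn J) Ω = Ω)
    (m n : ℕ) :
    wordOp s (List.ofFn fun k : Fin n => cycleLetter J hl (m + k)) (cycleVec s J Ω (m + n)) =
      cycleVec s J Ω m := by
  induction n generalizing m with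
  | zero => simp [wordOp]
  | succ n ih =>
    rw [List.ofFn_succ, wordOp, mul_apply_eq_comp]
    simp only [Fin.val_zero, add_zero, Fin.val_succ]
    rw [cycleVec_eq_apply_succ hl hfix m, ← ih (m + 1)]
    simp only [add_assoc, add_comm 1]

theorem IsCuntzFamily.pCond_cycleVec (hs : IsCuntzFamily s) (hl : 0 < l)
    (hfix : wordOp s (List.ofFn J) Ω = Ω) (m : ℕ) :
    PCond s (fun k => cycleLetter J hl (m + k)) (cycleVec s J Ω m) := by
  intro n
  rw [← wordOp_cycleLetter_apply_cycleVec hl hfix m n, ← mul_apply_eq_comp, mul_assoc,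
    hs.star_wordOp_mul_self, mul_one]

theorem inner_cycleVec_eq_zero (hl : 0 < l)
    (horth : Orthonormal ℂ fun i : Fin l => wordOp s ((List.ofFn J).drop i) Ω) {a b : ℕ}
    (hab : a % l ≠ b % l) : ⟪cycleVec s J Ω a, cycleVec s J Ω b⟫_ℂ = 0 :=
  horth.2 (i := ⟨a % l, Nat.mod_lt _ hl⟩) (j := ⟨b % l, Nat.mod_lt _ hl⟩)
    (Fin.ne_of_val_ne hab)

theorem IsCuntzFamily.inner_cycleVec_apply_cycleVec_eq_zero (hs : IsCuntzFamily s) (hl : 0 < l)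
    (hfix : wordOp s (List.ofFn J) Ω = Ω)
    (horth : Orthonormal ℂ fun i : Fin l => wordOp s ((List.ofFn J).drop i) Ω) {a b : ℕ}
    (hab : a % l ≠ b % l) {X : H →L[ℂ] H} (hX : X ∈ uhfMonomials s) :
    ⟪cycleVec s J Ω a, X (cycleVec s J Ω b)⟫_ℂ = 0 := by
  obtain rfl | ⟨K, L, hKL, rfl⟩ := hX
  · simp
  set u := List.ofFn fun k : Fin K.length => cycleLetter J hl (a + k)
  set u' := List.ofFn fun k : Fin K.length => cycleLetter J hl (b + k)
  rw [← wordOp_cycleLetter_apply_cycleVec hl hfix a K.length,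
    ← wordOp_cycleLetter_apply_cycleVec hl hfix b K.length,
    ← ContinuousLinearMap.adjoint_inner_right, ← ContinuousLinearMap.star_eq_adjoint]
  have hprod : star (wordOp s u) ((wordOp s K * star (wordOp s L)) (wordOp s u'
      (cycleVec s J Ω (b + K.length)))) = ((star (wordOp s u) * wordOp s K) *
        (star (wordOp s L) * wordOp s u')) (cycleVec s J Ω (b + K.length)) := by
    simp only [mul_apply_eq_comp]
  rw [hprod, hs.star_wordOp_mul_wordOp (by simp [u]),
    hs.star_wordOp_mul_wordOp (by simp [u', hKL])]
  split_ifs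
  · simpa using inner_cycleVec_eq_zero hl horth fun h => hab (Nat.ModEq.add_right_cancel' _ h)
  all_goals simp

theorem IsCuntzFamily.isOrtho_uhfSpan_cycleVec (hs : IsCuntzFamily s) (hl : 0 < l)
    (hfix : wordOp s (List.ofFn J) Ω = Ω)
    (horth : Orthonormal ℂ fun i : Fin l => wordOp s ((List.ofFn J).drop i) Ω) {i j : Fin l}
    (hij : i ≠ j) : UHFSpan s (cycleVec s J Ω i) ⟂ UHFSpan s (cycleVec s J Ω j) :=
  hs.isOrtho_uhfSpan fun _ hX => hs.inner_cycleVec_apply_cycleVec_eq_zero hl hfix horth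
    (by simpa [Nat.mod_eq_of_lt] using Fin.val_ne_of_ne hij) hX

theorem IsCuntzFamily.uhfSpan_cycleVec_succ_le_comap (hs : IsCuntzFamily s) (hl : 0 < l)
    (hfix : wordOp s (List.ofFn J) Ω = Ω) (a : Fin N) (m : ℕ) :
    UHFSpan s (cycleVec s J Ω (m + 1)) ≤
      (UHFSpan s (cycleVec s J Ω m)).comap (s a : H →ₗ[ℂ] H) :=
  uhfSpan_le_comap fun X hX => by
    have := apply_mem_uhfSpan (mul_mul_star_mem_uhfMonomials hX a (cycleLetter J hl m))
      (cycleVec s J Ω m)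
    rwa [mul_apply_eq_comp, mul_apply_eq_comp, hs.star_apply_cycleVec hl hfix] at this

theorem IsCuntzFamily.uhfSpan_cycleVec_le_comap_star (hs : IsCuntzFamily s) (hl : 0 < l)
    (hfix : wordOp s (List.ofFn J) Ω = Ω) (a : Fin N) (m : ℕ) :
    UHFSpan s (cycleVec s J Ω m) ≤
      (UHFSpan s (cycleVec s J Ω (m + 1))).comap
        ((star (s a) : H →L[ℂ] H) : H →ₗ[ℂ] H) :=
  uhfSpan_le_comap fun X hX => by
    have := apply_mem_uhfSpan (hs.star_mul_mul_mem_uhfMonomials hX a (cycleLetter J hl m))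
      (cycleVec s J Ω (m + 1))
    rwa [mul_apply_eq_comp, mul_apply_eq_comp, ← cycleVec_eq_apply_succ hl hfix] at this

theorem IsCuntzFamily.iSup_uhfSpan_cycleVec_eq_top (hs : IsCuntzFamily s) (hl : 0 < l)
    (hcyc : IsCyclicVec s Ω) (hfix : wordOp s (List.ofFn J) Ω = Ω)
    (horth : Orthonormal ℂ fun i : Fin l => wordOp s ((List.ofFn J).drop i) Ω) :
    ⨆ i : Fin l, UHFSpan s (cycleVec s J Ω i) = ⊤ := by
  set W := ⨆ i : Fin l, UHFSpan s (cycleVec s J Ω i)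
  have hle : ∀ m, UHFSpan s (cycleVec s J Ω m) ≤ W := fun m => by
    rw [← cycleVec_mod]
    exact le_iSup (fun i : Fin l => UHFSpan s (cycleVec s J Ω i)) ⟨m % l, Nat.mod_lt _ hl⟩
  have hclosed : IsClosed (W : Set H) :=
    Submodule.isClosed_iSup_of_pairwise_isOrtho fun _ _ =>
      hs.isOrtho_uhfSpan_cycleVec hl hfix horth
  have hΩ : Ω ∈ W := hle 0 (by simpa [cycleVec, hfix] using self_mem_uhfSpan (s := s) Ω)
  have hs_le : ∀ a m, UHFSpan s (cycleVec s J Ω m) ≤ W.comap (s a : H →ₗ[ℂ] H) :=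
    fun a m => by
      rw [← cycleVec_add_period, ← Nat.sub_add_cancel (show 1 ≤ m + l by omega)]
      exact (hs.uhfSpan_cycleVec_succ_le_comap hl hfix a _).trans (Submodule.comap_mono (hle _))
  have hstar_le : ∀ a m,
      UHFSpan s (cycleVec s J Ω m) ≤ W.comap ((star (s a) : H →L[ℂ] H) : H →ₗ[ℂ] H) :=
    fun a m => (hs.uhfSpan_cycleVec_le_comap_star hl hfix a m).trans (Submodule.comap_mono (hle _))
  exact hcyc W hclosed hΩ fun a x hx =>
    ⟨(iSup_le fun i => hs_le a i : W ≤ _) hx, (iSup_le fun i => hstar_le a i : W ≤ _) hx⟩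

end Cycle

theorem cycle_restriction_branching_general
    {H : Type*} [NormedAddCommGroup H] [InnerProductSpace ℂ H] [CompleteSpace H]
    {N l : ℕ} (hl : 0 < l) (s : Fin N → H →L[ℂ] H) (hs : IsCuntzFamily s)
    (J : Fin l → Fin N) (Ω : H) (hcyc : IsCyclicVec s Ω)
    (hfix : wordOp s (List.ofFn J) Ω = Ω)
    (horth : Orthonormal ℂ fun i : Fin l => wordOp s ((List.ofFn J).drop i) Ω) :
    -- pairwise orthogonality of the `V_i`
    (∀ i j : Fin l, i ≠ j →
      ∀ x ∈ UHFSpan s (wordOp s ((List.ofFn J).drop i) Ω),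
      ∀ y ∈ UHFSpan s (wordOp s ((List.ofFn J).drop j) Ω),
        (inner ℂ x y : ℂ) = 0)
    -- `H = V_1 ⊕ ⋯ ⊕ V_l`
    ∧ (⨆ i : Fin l, UHFSpan s (wordOp s ((List.ofFn J).drop i) Ω)) = ⊤
    -- invariance of each `V_i` under all `s_K s_L^*` with `|K| = |L|`
    ∧ (∀ i : Fin l, ∀ K L : List (Fin N), K.length = L.length →
        ∀ x ∈ UHFSpan s (wordOp s ((List.ofFn J).drop i) Ω),
          (wordOp s K * star (wordOp s L)) x ∈
            UHFSpan s (wordOp s ((List.ofFn J).drop i) Ω))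
    -- `e_i` satisfies the `P[σ_i J]`-condition
    ∧ (∀ i : Fin l, PCond s (fun m => J ⟨(i.val + m) % l, Nat.mod_lt _ hl⟩)
        (wordOp s ((List.ofFn J).drop i) Ω))
    -- irreducibility of each `V_i`
    ∧ (∀ i : Fin l,
        ∀ T : ↥(UHFSpan s (wordOp s ((List.ofFn J).drop i) Ω)) →L[ℂ]
              ↥(UHFSpan s (wordOp s ((List.ofFn J).drop i) Ω)),
        (∀ K L : List (Fin N), K.length = L.length →
          ∀ x y : ↥(UHFSpan s (wordOp s ((List.ofFn J).drop i) Ω)),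
            (y : H) = (wordOp s K * star (wordOp s L)) (x : H) →
            (T y : H) = (wordOp s K * star (wordOp s L)) ((T x : H))) →
        ∃ c : ℂ, ∀ x, T x = c • x) := by
  have hP : ∀ i : Fin l, PCond s (fun m => J ⟨(i.val + m) % l, Nat.mod_lt _ hl⟩)
      (wordOp s ((List.ofFn J).drop i) Ω) := fun i =>
    cycleVec_val (s := s) (Ω := Ω) i ▸ hs.pCond_cycleVec hl hfix i
  refine ⟨fun i j hij x hx y hy => ?_, ?_,
    fun i K L hKL x hx => hs.apply_mem_uhfSpan_of_mem (wordOp_mul_star_mem_uhfMonomials hKL) hx,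
    hP, fun i T hT => hs.exists_eq_smul_of_commute (horth.1 i) (hP i) T hT⟩
  · rw [← cycleVec_val] at hx hy
    exact (hs.isOrtho_uhfSpan_cycleVec hl hfix horth hij).inner_eq hx hy
  · simpa only [cycleVec_val] using hs.iSup_uhfSpan_cycleVec_eq_top hl hcyc hfix horth

theorem cycle_restriction_branching
    {H : Type*} [NormedAddCommGroup H] [InnerProductSpace ℂ H] [CompleteSpace H]
    {N l : ℕ} (hl : 0 < l) (s : Fin N → H →L[ℂ] H) (hs : IsCuntzFamily s)
    (J : Fin l → Fin N) (Ω : H) (hΩ : ‖Ω‖ = 1) (hcyc : IsCyclicVec s Ω)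
    (hfix : wordOp s (List.ofFn J) Ω = Ω)
    (horth : Orthonormal ℂ fun i : Fin l => wordOp s ((List.ofFn J).drop i) Ω) :
    -- pairwise orthogonality of the `V_i`
    (∀ i j : Fin l, i ≠ j →
      ∀ x ∈ UHFSpan s (wordOp s ((List.ofFn J).drop i) Ω),
      ∀ y ∈ UHFSpan s (wordOp s ((List.ofFn J).drop j) Ω),
        (inner ℂ x y : ℂ) = 0)
    -- `H = V_1 ⊕ ⋯ ⊕ V_l`
    ∧ (⨆ i : Fin l, UHFSpan s (wordOp s ((List.ofFn J).drop i) Ω)) = ⊤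
    -- invariance of each `V_i` under all `s_K s_L^*` with `|K| = |L|`
    ∧ (∀ i : Fin l, ∀ K L : List (Fin N), K.length = L.length →
        ∀ x ∈ UHFSpan s (wordOp s ((List.ofFn J).drop i) Ω),
          (wordOp s K * star (wordOp s L)) x ∈
            UHFSpan s (wordOp s ((List.ofFn J).drop i) Ω))
    -- `e_i` satisfies the `P[σ_i J]`-condition
    ∧ (∀ i : Fin l, PCond s (fun m => J ⟨(i.val + m) % l, Nat.mod_lt _ hl⟩)
        (wordOp s ((List.ofFn J).drop i) Ω))
    -- irreducibility of each `V_i`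
    ∧ (∀ i : Fin l,
        ∀ T : ↥(UHFSpan s (wordOp s ((List.ofFn J).drop i) Ω)) →L[ℂ]
              ↥(UHFSpan s (wordOp s ((List.ofFn J).drop i) Ω)),
        (∀ K L : List (Fin N), K.length = L.length →
          ∀ x y : ↥(UHFSpan s (wordOp s ((List.ofFn J).drop i) Ω)),
            (y : H) = (wordOp s K * star (wordOp s L)) (x : H) →
            (T y : H) = (wordOp s K * star (wordOp s L)) ((T x : H))) →
        ∃ c : ℂ, ∀ x, T x = c • x) :=
  cycle_restriction_branching_general hl s hs J Ω hcyc hfix horth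
end
end

section
/- Let (s_1, s_2) be a Cuntz family of order 2 on a complex Hilbert space H with a cyclic unit vector Ω. If (s_1 + s_2)Ω = √2·Ω, then for every n ≥ 1 one has 2^{−n} Σ_{J,K ∈ {1,2}^n} s_J s_K^* Ω = Ω, and Ω is UHF-cyclic. If instead (s_1 − s_2)Ω = √2·Ω, then for every n ≥ 1 one has 2^{−n} Σ_{J,K ∈ {1,2}^n} (−1)^{‖J−K‖} s_J s_K^* Ω = Ω, where ‖J−K‖ := Σ_{i=1}^n (j_i − k_i) for J = (j_i), K = (k_i), and Ω is UHF-cyclic. That is, the restriction of GP(±) to the gauge-invariant subalgebra is GP[±]. -/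
noncomputable section

def IsUHFCyclic {H : Type*} [NormedAddCommGroup H] [InnerProductSpace ℂ H]
    [CompleteSpace H] {N : ℕ} (s : Fin N → H →L[ℂ] H) (Ω : H) : Prop :=
  UHFSpan s Ω = ⊤

/-- `F_{n,+} = 2^{-n} Σ_{J,K ∈ {1,2}^n} s_J s_K^*`. -/
def Fplus {H : Type*} [NormedAddCommGroup H] [InnerProductSpace ℂ H]
    [CompleteSpace H] (s : Fin 2 → H →L[ℂ] H) (n : ℕ) : H →L[ℂ] H :=
  ((2 : ℂ) ^ n)⁻¹ • ∑ J : Fin n → Fin 2, ∑ K : Fin n → Fin 2,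
    wordOp s (List.ofFn J) * star (wordOp s (List.ofFn K))

/-- `F_{n,-} = 2^{-n} Σ_{J,K ∈ {1,2}^n} (-1)^{‖J-K‖} s_J s_K^*`. -/
def Fminus {H : Type*} [NormedAddCommGroup H] [InnerProductSpace ℂ H]
    [CompleteSpace H] (s : Fin 2 → H →L[ℂ] H) (n : ℕ) : H →L[ℂ] H :=
  ((2 : ℂ) ^ n)⁻¹ • ∑ J : Fin n → Fin 2, ∑ K : Fin n → Fin 2,
    ((-1 : ℂ) ^ (∑ i, (((J i : ℕ) : ℤ) - ((K i : ℕ) : ℤ)))) •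
      (wordOp s (List.ofFn J) * star (wordOp s (List.ofFn K)))

/-! Writing `Ω = Σ s_i s_i^* Ω`, the hypothesis `(s_1 + s_2)Ω = √2 Ω` says exactly that
`s_i^* Ω = Ω/√2` for both `i`. Summing over words, `F_{n,+} = 2^{-n} T^n (T^*)^n` with
`T = s_1 + s_2`, and `T Ω = T^* Ω = √2 Ω` gives `F_{n,+} Ω = Ω`. Because each `s_i^*` acts on `Ω`
by a scalar, `s_i^*` shortens both words of `s_K s_L^* Ω` (or kills the vector), and `s_i` lengthens
both (insert `Ω = √2 s_1^* Ω`), so the closed span of these vectors is invariant and contains `Ω`;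
cyclicity makes it all of `H`. The `−` case is the `+` case for the Cuntz family `(s_1, −s_2)`. -/

open Submodule

theorem sum_prod_map_ofFn {A ι : Type*} [Semiring A] [Fintype ι] (a : ι → A) (n : ℕ) :
    ∑ J : Fin n → ι, ((List.ofFn J).map a).prod = (∑ i, a i) ^ n := by
  induction n with
  | zero => simp
  | succ n ih =>
    rw [← (Fin.consEquiv fun _ : Fin (n + 1) => ι).sum_comp, Fintype.sum_prod_type, pow_succ',
      Finset.sum_mul]
    simp only [Fin.consEquiv_apply, List.ofFn_succ, Fin.cons_zero, Fin.cons_succ,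
      List.map_cons, List.prod_cons, ← Finset.mul_sum, ih]

theorem Submodule.mapsTo_topologicalClosure_span {R E : Type*} [Semiring R] [TopologicalSpace E]
    [AddCommMonoid E] [Module R E] [ContinuousAdd E] [ContinuousConstSMul R E]
    (A : E →L[R] E) {S : Set E} (hA : ∀ x ∈ S, A x ∈ span R S) :
    Set.MapsTo A (span R S).topologicalClosure (span R S).topologicalClosure := by
  have hspan : Set.MapsTo A (span R S) (span R S) := fun _ hx =>
    (span_le (p := (span R S).comap (A : E →ₗ[R] E))).2 hA hx
  simpa only [topologicalClosure_coe] using hspan.closure A.continuous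

theorem pow_apply_eq_smul {R E : Type*} [CommSemiring R] [TopologicalSpace E] [AddCommMonoid E]
    [Module R E] {T : E →L[R] E} {v : E} {r : R} (h : T v = r • v) (n : ℕ) :
    (T ^ n) v = r ^ n • v := by
  induction n with
  | zero => simp
  | succ n ih => rw [pow_succ, mul_apply_eq_comp, h, map_smul, ih, smul_smul, pow_succ']

section Cuntz

variable {H : Type*} [NormedAddCommGroup H] [InnerProductSpace ℂ H] [CompleteSpace H]
  {N : ℕ} {s : Fin N → H →L[ℂ] H}

theorem wordOp_eq_prod (s : Fin N → H →L[ℂ] H) (L : List (Fin N)) :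
    wordOp s L = (L.map s).prod := by
  induction L with
  | nil => rfl
  | cons j J ih => simp [wordOp, ih]

theorem wordOp_smul (u : Fin N → ℂ) (s : Fin N → H →L[ℂ] H) (L : List (Fin N)) :
    wordOp (u • s) L = (L.map u).prod • wordOp s L := by
  induction L with
  | nil => simp [wordOp]
  | cons j J ih =>
    simp only [wordOp, ih, Pi.smul_apply', List.map_cons, List.prod_cons, smul_mul_smul_comm]

theorem IsCuntzFamily.star_apply_apply (hs : IsCuntzFamily s) (i j : Fin N) (x : H) :
    star (s i) (s j x) = if i = j then x else 0 := by
  rw [← mul_apply_eq_comp, hs.1 i j]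
  split_ifs <;> rfl

theorem IsCuntzFamily.star_apply_eq_smul (hs : IsCuntzFamily s) {c : Fin N → ℂ} {Ω : H}
    (hΩ : Ω = ∑ j, c j • s j Ω) (i : Fin N) : star (s i) Ω = c i • Ω := by
  conv_lhs => rw [hΩ]
  simp [map_sum, hs.star_apply_apply]

theorem IsCuntzFamily.smul (hs : IsCuntzFamily s) {u : Fin N → ℂ} (hu : ∀ i, ‖u i‖ = 1) :
    IsCuntzFamily (u • s) := by
  have hu' : ∀ i, starRingEnd ℂ (u i) * u i = 1 := fun i => by
    rw [Complex.conj_mul', hu]; norm_num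
  refine ⟨fun i j => ?_, ?_⟩
  · split_ifs with hij
    · subst hij
      simp only [Pi.smul_apply', star_smul, smul_mul_smul_comm, hs.1 i i, if_true,
        Complex.star_def, hu', one_smul]
    · simp [star_smul, hs.1 i j, hij]
  · simp only [Pi.smul_apply', star_smul, smul_mul_smul_comm, Complex.star_def, mul_comm (u _),
      hu', one_smul, hs.2]

theorem IsCyclicVec.smul {Ω : H} (hcyc : IsCyclicVec s Ω) {u : Fin N → ℂ} (hu : ∀ i, u i ≠ 0) :
    IsCyclicVec (u • s) Ω := by
  intro W hW hΩ hinv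
  refine hcyc W hW hΩ fun i x hx => ?_
  obtain ⟨h₁, h₂⟩ := hinv i x hx
  simp only [Pi.smul_apply', star_smul, smul_apply] at h₁ h₂
  exact ⟨(W.smul_mem_iff (hu i)).1 h₁,
    (W.smul_mem_iff ((map_ne_zero (starRingEnd ℂ)).2 (hu i))).1 h₂⟩

theorem UHFSpan_smul_le (u : Fin N → ℂ) (s : Fin N → H →L[ℂ] H) (v : H) :
    UHFSpan (u • s) v ≤ UHFSpan s v := by
  refine topologicalClosure_mono (span_le.2 ?_)
  rintro _ ⟨K, L, hKL, rfl⟩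
  rw [wordOp_smul, wordOp_smul, star_smul, smul_mul_smul_comm, smul_apply]
  exact smul_mem _ _ (subset_span ⟨K, L, hKL, rfl⟩)

theorem IsUHFCyclic.of_smul {u : Fin N → ℂ} {Ω : H} (h : IsUHFCyclic (u • s) Ω) :
    IsUHFCyclic s Ω :=
  top_le_iff.1 (h ▸ UHFSpan_smul_le u s Ω)

theorem isUHFCyclic_of_star_apply_eq_smul (hs : IsCuntzFamily s) {Ω : H}
    (hcyc : IsCyclicVec s Ω) {c : Fin N → ℂ} (hc : ∀ i, star (s i) Ω = c i • Ω) {j : Fin N}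
    (hj : c j ≠ 0) : IsUHFCyclic s Ω := by
  set S : Set H := {x | ∃ K L : List (Fin N), K.length = L.length ∧
    x = (wordOp s K * star (wordOp s L)) Ω}
  have hΩ : Ω ∈ S := ⟨[], [], rfl, by simp [wordOp]⟩
  have hgen : ∀ i, ∀ x ∈ S, s i x ∈ span ℂ S := by
    rintro i _ ⟨K, L, hKL, rfl⟩
    have hword : s i ((wordOp s K * star (wordOp s L)) Ω)
        = (c j)⁻¹ • (wordOp s (i :: K) * star (wordOp s (j :: L))) Ω := by
      simp [wordOp, star_mul, hc, inv_smul_smul₀ hj]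
    rw [hword]
    exact smul_mem _ _ (subset_span ⟨_, _, by simp [hKL], rfl⟩)
  have hgen_star : ∀ i, ∀ x ∈ S, star (s i) x ∈ span ℂ S := by
    rintro i _ ⟨_ | ⟨k, K⟩, _ | ⟨l, L⟩, hKL, rfl⟩
    · simpa [wordOp, hc] using smul_mem _ (c i) (subset_span hΩ)
    · simp at hKL
    · simp at hKL
    · have hword : star (s i) ((wordOp s (k :: K) * star (wordOp s (l :: L))) Ω)
          = if i = k then c l • (wordOp s K * star (wordOp s L)) Ω else 0 := by
        simp [wordOp, star_mul, hc, hs.star_apply_apply]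
      rw [hword]
      split_ifs
      · exact smul_mem _ _ (subset_span ⟨K, L, by simpa using hKL, rfl⟩)
      · exact zero_mem _
  exact hcyc _ (isClosed_topologicalClosure _) (le_topologicalClosure _ (subset_span hΩ))
    fun i x hx => ⟨mapsTo_topologicalClosure_span (s i) (hgen i) hx,
      mapsTo_topologicalClosure_span (star (s i)) (hgen_star i) hx⟩

theorem Fplus_eq (s : Fin 2 → H →L[ℂ] H) (n : ℕ) :
    Fplus s n = ((2 : ℂ) ^ n)⁻¹ • ((s 0 + s 1) ^ n * star (s 0 + s 1) ^ n) := by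
  simp_rw [Fplus, ← Finset.sum_mul_sum, ← star_sum, wordOp_eq_prod, sum_prod_map_ofFn,
    Fin.sum_univ_two, star_pow]

theorem Fminus_eq_Fplus (s : Fin 2 → H →L[ℂ] H) (n : ℕ) :
    Fminus s n = Fplus ((fun i : Fin 2 => (-1 : ℂ) ^ (i : ℕ)) • s) n := by
  simp_rw [Fminus, Fplus, wordOp_smul, star_smul, smul_mul_smul_comm]
  congr 1
  refine Finset.sum_congr rfl fun J _ => Finset.sum_congr rfl fun K _ => ?_
  congr 1
  simp only [List.map_ofFn, List.prod_ofFn, Function.comp_apply, Finset.prod_pow_eq_pow_sum,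
    Finset.sum_sub_distrib, star_pow, star_neg, star_one]
  rw [← Nat.cast_sum, ← Nat.cast_sum, zpow_sub₀ (by norm_num), zpow_natCast, zpow_natCast,
    div_eq_mul_inv, ← inv_pow, inv_neg, inv_one]

theorem Fplus_apply_eq_self_and_isUHFCyclic {s : Fin 2 → H →L[ℂ] H} (hs : IsCuntzFamily s)
    {Ω : H} (hcyc : IsCyclicVec s Ω) (hΩ : (s 0 + s 1) Ω = (Real.sqrt 2 : ℂ) • Ω) :
    (∀ n, Fplus s n Ω = Ω) ∧ IsUHFCyclic s Ω := by
  have hsq : (Real.sqrt 2 : ℂ) * Real.sqrt 2 = 2 := by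
    exact_mod_cast Real.mul_self_sqrt zero_le_two
  have hne : (Real.sqrt 2 : ℂ) ≠ 0 := by exact_mod_cast (Real.sqrt_pos.2 two_pos).ne'
  have hsum : Ω = ∑ i, (Real.sqrt 2 : ℂ)⁻¹ • s i Ω := by
    rw [← Finset.smul_sum, Fin.sum_univ_two, ← add_apply, hΩ, inv_smul_smul₀ hne]
  have hstar := hs.star_apply_eq_smul hsum
  refine ⟨fun n => ?_, isUHFCyclic_of_star_apply_eq_smul hs hcyc hstar (j := 0) (inv_ne_zero hne)⟩
  have hstarΩ : star (s 0 + s 1) Ω = (Real.sqrt 2 : ℂ) • Ω := by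
    rw [star_add, add_apply, hstar, hstar, ← add_smul]
    congr 1
    field_simp
    rw [sq, hsq, one_add_one_eq_two]
  rw [Fplus_eq, smul_apply, mul_apply_eq_comp, pow_apply_eq_smul hstarΩ, map_smul,
    pow_apply_eq_smul hΩ, smul_smul, smul_smul, mul_assoc, ← mul_pow, hsq,
    inv_mul_cancel₀ (pow_ne_zero _ two_ne_zero), one_smul]

end Cuntz

theorem GP_restriction_is_GPpm_general
    {H : Type*} [NormedAddCommGroup H] [InnerProductSpace ℂ H] [CompleteSpace H]
    (s : Fin 2 → H →L[ℂ] H) (hs : IsCuntzFamily s)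
    (Ω : H) (hcyc : IsCyclicVec s Ω) :
    ((s 0 + s 1) Ω = (Real.sqrt 2 : ℂ) • Ω →
      (∀ n : ℕ, 1 ≤ n → Fplus s n Ω = Ω) ∧ IsUHFCyclic s Ω)
    ∧ ((s 0 - s 1) Ω = (Real.sqrt 2 : ℂ) • Ω →
      (∀ n : ℕ, 1 ≤ n → Fminus s n Ω = Ω) ∧ IsUHFCyclic s Ω) := by
  refine ⟨fun hΩ => ?_, fun hΩ => ?_⟩
  · obtain ⟨hF, hU⟩ := Fplus_apply_eq_self_and_isUHFCyclic hs hcyc hΩ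
    exact ⟨fun n _ => hF n, hU⟩
  · set u : Fin 2 → ℂ := fun i => (-1) ^ (i : ℕ)
    have hsum : (u • s) 0 + (u • s) 1 = s 0 - s 1 := by
      simp [u, sub_eq_add_neg]
    obtain ⟨hF, hU⟩ := Fplus_apply_eq_self_and_isUHFCyclic (hs.smul (by simp [u]))
      (hcyc.smul (by simp [u])) (hsum ▸ hΩ)
    exact ⟨fun n _ => Fminus_eq_Fplus s n ▸ hF n, hU.of_smul⟩

theorem GP_restriction_is_GPpm
    {H : Type*} [NormedAddCommGroup H] [InnerProductSpace ℂ H] [CompleteSpace H]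
    (s : Fin 2 → H →L[ℂ] H) (hs : IsCuntzFamily s)
    (Ω : H) (hΩ : ‖Ω‖ = 1) (hcyc : IsCyclicVec s Ω) :
    ((s 0 + s 1) Ω = (Real.sqrt 2 : ℂ) • Ω →
      (∀ n : ℕ, 1 ≤ n → Fplus s n Ω = Ω) ∧ IsUHFCyclic s Ω)
    ∧ ((s 0 - s 1) Ω = (Real.sqrt 2 : ℂ) • Ω →
      (∀ n : ℕ, 1 ≤ n → Fminus s n Ω = Ω) ∧ IsUHFCyclic s Ω) :=
  GP_restriction_is_GPpm_general s hs Ω hcyc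
end
end
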